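/- If G is a graph without isolated vertices, then χ'_sCF(G) ≤ 2⌈log₂ χ(G)⌉, where χ(G) is the chromatic number of G. -/

import Mathlib

open SimpleGraph

variable {V : Type*}

/-- The closed edge-neighborhood of an edge `uv`: all edges incident to `u` or `v`. -/
def edgeNbhd (G : SimpleGraph V) (u v : V) : Set (Sym2 V) :=
  G.incidenceSet u ∪ G.incidenceSet v

/-- An edge `uv` is satisfied by a partial edge coloring `φ` if some color appears
exactly once among the colored edges incident to `u` or `v`. -/
def Satisfied (G : SimpleGraph V) (φ : Sym2 V → Option ℕ) (u v : V) : Prop :=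
  ∃ c : ℕ, {e | e ∈ edgeNbhd G u v ∧ φ e = some c}.ncard = 1

/-- A partial edge coloring of `G` with `k` colors such that every edge of `G` is satisfied. -/
def IsPartialSCF (G : SimpleGraph V) (k : ℕ) (φ : Sym2 V → Option ℕ) : Prop :=
  (∀ e c, φ e = some c → e ∈ G.edgeSet ∧ c < k) ∧
  ∀ ⦃u v⦄, G.Adj u v → Satisfied G φ u v

/-- `χ'_sCF(G)`. -/
noncomputable def sCFIndex (G : SimpleGraph V) : ℕ :=
  sInf {k | ∃ φ, IsPartialSCF G k φ}

/-- A (total) conflict-free edge coloring of `G` with `k` colors. -/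
def IsCF (G : SimpleGraph V) (k : ℕ) (φ : Sym2 V → ℕ) : Prop :=
  (∀ e ∈ G.edgeSet, φ e < k) ∧
  ∀ ⦃u v⦄, G.Adj u v → ∃ c : ℕ, {e | e ∈ edgeNbhd G u v ∧ φ e = c}.ncard = 1

/-- `χ'_CF(G)`, the conflict-free chromatic index. -/
noncomputable def cfIndex (G : SimpleGraph V) : ℕ :=
  sInf {k | ∃ φ, IsCF G k φ}

/-- The neighborhood of a set of vertices. -/
def NbhdSet (G : SimpleGraph V) (S : Set V) : Set V :=
  ⋃ x ∈ S, G.neighborSet x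

/-- The set of private neighbors of `x` with respect to `D`. -/
def privNbrs (G : SimpleGraph V) (D : Set V) (x : V) : Set V :=
  {y ∈ G.neighborSet x | G.neighborSet y ∩ D = {x}}

/-- The number of edges of `F` incident to `v`. -/
noncomputable def edegOn (F : Set (Sym2 V)) (v : V) : ℕ :=
  {e ∈ F | v ∈ e}.ncard

/-!
Fix a proper colouring `c` with `2 ^ t` colours, `t = ⌈log₂ χ(G)⌉`, and give the edge `uv` the
level `log₂ (c u xor c v)`, the highest bit in which the colours of its ends differ. Bit `j` of
the colour bipartitions the graph of the level-`j` edges, and level `j` gets its own colours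
`2j, 2j + 1`, so it suffices to colour a bipartite graph with parts `A`, `B` using two colours.
For this take `D ⊆ B` minimal dominating the non-isolated vertices of `A`; every `d ∈ D` has a
private neighbour `pr d ∈ A`, whose only neighbour in `D` is `d`. Colour each edge `{pr d, d}`
with `1` and, at every other non-isolated `a ∈ A`, one edge from `a` into `D` with `0`. An edge
`uv` with `u ∈ A` then sees exactly one edge of colour `1` if `v ∈ D` or `u` is some `pr d`, and
otherwise exactly one edge of colour `0`, the one chosen at `u`.
-/

lemma mem_edgeNbhd_iff {G : SimpleGraph V} {u v : V} {e : Sym2 V} :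
    e ∈ edgeNbhd G u v ↔ e ∈ G.edgeSet ∧ (u ∈ e ∨ v ∈ e) := by
  simp [edgeNbhd, incidenceSet, and_or_left]

lemma Satisfied.symm {G : SimpleGraph V} {φ : Sym2 V → Option ℕ} {u v : V}
    (h : Satisfied G φ u v) : Satisfied G φ v u := by
  simpa only [Satisfied, edgeNbhd, Set.union_comm] using h

lemma satisfied_of_forall_eq {G : SimpleGraph V} {φ : Sym2 V → Option ℕ} {u v : V}
    {e₀ : Sym2 V} {c : ℕ} (he₀ : e₀ ∈ edgeNbhd G u v) (hc : φ e₀ = some c)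
    (h : ∀ e ∈ edgeNbhd G u v, φ e = some c → e = e₀) : Satisfied G φ u v :=
  ⟨c, Set.ncard_eq_one.2 ⟨e₀, Set.ext fun _ =>
    ⟨fun he => h _ he.1 he.2, fun he => he ▸ ⟨he₀, hc⟩⟩⟩⟩

structure IsPrivateDomination (H : SimpleGraph V) (A D : Set V) (pr τ : V → V) : Prop where
  pr_mem : ∀ d ∈ D, pr d ∈ A
  adj_pr : ∀ d ∈ D, H.Adj (pr d) d
  eq_of_adj_pr : ∀ d ∈ D, ∀ d' ∈ D, H.Adj (pr d) d' → d' = d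
  τ_mem : ∀ ⦃a b⦄, a ∈ A → H.Adj a b → τ a ∈ D
  adj_τ : ∀ ⦃a b⦄, a ∈ A → H.Adj a b → H.Adj a (τ a)

/-- Take `D` minimal among the sets dominating the non-isolated vertices of `A`: a vertex of `D`
without a private neighbour could be removed from `D`. -/
theorem exists_isPrivateDomination [Finite V] (H : SimpleGraph V) (A : Set V) :
    ∃ D pr τ, IsPrivateDomination H A D pr τ := by
  let Dominates (D : Set V) : Prop := ∀ a ∈ A, (∃ b, H.Adj a b) → ∃ d ∈ D, H.Adj a d
  obtain ⟨D, hD, hmin⟩ := exists_minimal_of_wellFoundedLT Dominates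
    ⟨Set.univ, fun _ _ ⟨b, hb⟩ => ⟨b, trivial, hb⟩⟩
  have hprivate : ∀ d ∈ D, ∃ a ∈ A, H.Adj a d ∧ ∀ d' ∈ D, H.Adj a d' → d' = d := by
    intro d hd
    have hnot : ¬ Dominates (D \ {d}) := fun h =>
      (Set.sdiff_singleton_ssubset.2 hd).not_subset (hmin h Set.sdiff_subset)
    simp only [Dominates, not_forall, not_exists, Set.mem_sdiff, Set.mem_singleton_iff] at hnot
    obtain ⟨a, ha, hne, hnone⟩ := hnot
    obtain ⟨d₀, hd₀, had₀⟩ := hD a ha hne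
    have key : ∀ d' ∈ D, H.Adj a d' → d' = d := fun d' hd' had' => by
      by_contra h
      exact hnone d' ⟨⟨hd', h⟩, had'⟩
    exact ⟨a, ha, key d₀ hd₀ had₀ ▸ had₀, key⟩
  choose! pr hprA hpr_adj hpr_eq using hprivate
  choose! τ hτD hτ_adj using hD
  exact ⟨D, pr, τ, hprA, hpr_adj, hpr_eq, fun a b ha hab => hτD a ha ⟨b, hab⟩,
    fun a b ha hab => hτ_adj a ha ⟨b, hab⟩⟩

open Classical in
noncomputable def privateDominationColoring (H : SimpleGraph V) (A D : Set V) (pr τ : V → V)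
    (e : Sym2 V) : Option ℕ :=
  if ∃ d ∈ D, e = s(pr d, d) then some 1
  else if ∃ a ∈ A, H.Adj a (τ a) ∧ e = s(a, τ a) then some 0 else none

section PrivateDomination

variable {H : SimpleGraph V} {A D : Set V} {pr τ : V → V}

lemma privateDominationColoring_eq_some_one {e : Sym2 V} :
    privateDominationColoring H A D pr τ e = some 1 ↔ ∃ d ∈ D, e = s(pr d, d) := by
  unfold privateDominationColoring
  split_ifs <;> simp_all

lemma privateDominationColoring_eq_some_zero {e : Sym2 V} :
    privateDominationColoring H A D pr τ e = some 0 ↔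
      (¬ ∃ d ∈ D, e = s(pr d, d)) ∧ ∃ a ∈ A, H.Adj a (τ a) ∧ e = s(a, τ a) := by
  unfold privateDominationColoring
  split_ifs <;> simp_all

lemma IsPrivateDomination.mem_edgeSet_and_lt_two
    (h : IsPrivateDomination H A D pr τ) {e : Sym2 V} {c : ℕ}
    (he : privateDominationColoring H A D pr τ e = some c) : e ∈ H.edgeSet ∧ c < 2 := by
  unfold privateDominationColoring at he
  split_ifs at he with h₁ h₀
  · obtain ⟨d, hd, rfl⟩ := h₁
    exact ⟨h.adj_pr d hd, by simp only [Option.some_inj] at he; omega⟩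
  · obtain ⟨a, -, ha, rfl⟩ := h₀
    exact ⟨ha, by simp only [Option.some_inj] at he; omega⟩

lemma IsPrivateDomination.not_mem (h : IsPrivateDomination H A D pr τ)
    (hA : ∀ ⦃u v⦄, H.Adj u v → (u ∈ A ↔ v ∉ A)) {d : V} (hd : d ∈ D) : d ∉ A :=
  (hA (h.adj_pr d hd)).1 (h.pr_mem d hd)

lemma IsPrivateDomination.satisfied_of_mem_right (h : IsPrivateDomination H A D pr τ)
    (hA : ∀ ⦃u v⦄, H.Adj u v → (u ∈ A ↔ v ∉ A)) {u v : V} (huv : H.Adj u v) (hu : u ∈ A)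
    (hvD : v ∈ D) : Satisfied H (privateDominationColoring H A D pr τ) u v := by
  refine satisfied_of_forall_eq (e₀ := s(pr v, v)) (c := 1)
    (mem_edgeNbhd_iff.2 ⟨h.adj_pr v hvD, Or.inr (Sym2.mem_mk_right _ _)⟩)
    (privateDominationColoring_eq_some_one.2 ⟨v, hvD, rfl⟩) fun e he hc => ?_
  obtain ⟨d, hd, rfl⟩ := privateDominationColoring_eq_some_one.1 hc
  simp only [mem_edgeNbhd_iff, Sym2.mem_iff] at he
  rcases he.2 with (rfl | rfl) | (rfl | rfl)
  · rw [h.eq_of_adj_pr d hd v hvD huv]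
  · exact absurd hu (h.not_mem hA hd)
  · exact absurd (h.pr_mem d hd) ((hA huv).1 hu)
  · rfl

lemma IsPrivateDomination.satisfied_of_eq_pr (h : IsPrivateDomination H A D pr τ)
    (hA : ∀ ⦃u v⦄, H.Adj u v → (u ∈ A ↔ v ∉ A)) {d₀ v : V} (hd₀ : d₀ ∈ D)
    (huv : H.Adj (pr d₀) v) (hvD : v ∉ D) :
    Satisfied H (privateDominationColoring H A D pr τ) (pr d₀) v := by
  refine satisfied_of_forall_eq (e₀ := s(pr d₀, d₀)) (c := 1)
    (mem_edgeNbhd_iff.2 ⟨h.adj_pr d₀ hd₀, Or.inl (Sym2.mem_mk_left _ _)⟩)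
    (privateDominationColoring_eq_some_one.2 ⟨d₀, hd₀, rfl⟩) fun e he hc => ?_
  obtain ⟨d, hd, rfl⟩ := privateDominationColoring_eq_some_one.1 hc
  simp only [mem_edgeNbhd_iff, Sym2.mem_iff] at he
  rcases he.2 with (hdd | rfl) | (rfl | rfl)
  · rw [h.eq_of_adj_pr d₀ hd₀ d hd (hdd ▸ h.adj_pr d hd), hdd]
  · exact absurd (h.pr_mem d₀ hd₀) (h.not_mem hA hd)
  · exact absurd (h.pr_mem d hd) ((hA huv).1 (h.pr_mem d₀ hd₀))
  · exact absurd hd hvD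

lemma IsPrivateDomination.satisfied_of_ne_pr (h : IsPrivateDomination H A D pr τ)
    (hA : ∀ ⦃u v⦄, H.Adj u v → (u ∈ A ↔ v ∉ A)) {u v : V} (huv : H.Adj u v) (hu : u ∈ A)
    (hvD : v ∉ D) (hupr : ∀ d ∈ D, pr d ≠ u) :
    Satisfied H (privateDominationColoring H A D pr τ) u v := by
  have huτ : H.Adj u (τ u) := h.adj_τ hu huv
  have huτ_uncoloured : ¬ ∃ d ∈ D, s(u, τ u) = s(pr d, d) := by
    rintro ⟨d, hd, hud⟩
    rcases Sym2.eq_iff.1 hud with ⟨hpr, -⟩ | ⟨rfl, -⟩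
    · exact hupr d hd hpr.symm
    · exact h.not_mem hA hd hu
  refine satisfied_of_forall_eq (e₀ := s(u, τ u)) (c := 0)
    (mem_edgeNbhd_iff.2 ⟨huτ, Or.inl (Sym2.mem_mk_left _ _)⟩)
    (privateDominationColoring_eq_some_zero.2 ⟨huτ_uncoloured, u, hu, huτ, rfl⟩)
    fun e he hc => ?_
  obtain ⟨-, a, ha, haτ, rfl⟩ := privateDominationColoring_eq_some_zero.1 hc
  simp only [mem_edgeNbhd_iff, Sym2.mem_iff] at he
  rcases he.2 with (rfl | rfl) | (rfl | rfl)
  · rfl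
  · exact absurd hu (h.not_mem hA (h.τ_mem ha haτ))
  · exact absurd ha ((hA huv).1 hu)
  · exact absurd (h.τ_mem ha haτ) hvD

lemma IsPrivateDomination.satisfied_of_mem (h : IsPrivateDomination H A D pr τ)
    (hA : ∀ ⦃u v⦄, H.Adj u v → (u ∈ A ↔ v ∉ A)) {u v : V} (huv : H.Adj u v) (hu : u ∈ A) :
    Satisfied H (privateDominationColoring H A D pr τ) u v := by
  by_cases hvD : v ∈ D
  · exact h.satisfied_of_mem_right hA huv hu hvD
  by_cases hupr : ∃ d ∈ D, pr d = u
  · obtain ⟨d₀, hd₀, rfl⟩ := hupr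
    exact h.satisfied_of_eq_pr hA hd₀ huv hvD
  · push Not at hupr
    exact h.satisfied_of_ne_pr hA huv hu hvD hupr

theorem IsPrivateDomination.isPartialSCF (h : IsPrivateDomination H A D pr τ)
    (hA : ∀ ⦃u v⦄, H.Adj u v → (u ∈ A ↔ v ∉ A)) :
    IsPartialSCF H 2 (privateDominationColoring H A D pr τ) := by
  refine ⟨fun _ _ => h.mem_edgeSet_and_lt_two, fun u v huv => ?_⟩
  by_cases hu : u ∈ A
  · exact h.satisfied_of_mem hA huv hu
  · exact (h.satisfied_of_mem hA huv.symm (not_not.1 (mt (hA huv).2 hu))).symm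

end PrivateDomination

theorem exists_isPartialSCF_two [Finite V] {H : SimpleGraph V} {A : Set V}
    (hA : ∀ ⦃u v⦄, H.Adj u v → (u ∈ A ↔ v ∉ A)) : ∃ φ, IsPartialSCF H 2 φ := by
  obtain ⟨D, pr, τ, h⟩ := exists_isPrivateDomination H A
  exact ⟨_, h.isPartialSCF hA⟩

def levelGraph (G : SimpleGraph V) (ℓ : Sym2 V → ℕ) (j : ℕ) : SimpleGraph V :=
  G.deleteEdges {e | ℓ e ≠ j}

lemma levelGraph_adj {G : SimpleGraph V} {ℓ : Sym2 V → ℕ} {j : ℕ} {u v : V} :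
    (levelGraph G ℓ j).Adj u v ↔ G.Adj u v ∧ ℓ s(u, v) = j := by
  simp [levelGraph]

lemma mem_edgeSet_levelGraph {G : SimpleGraph V} {ℓ : Sym2 V → ℕ} {j : ℕ} {e : Sym2 V} :
    e ∈ (levelGraph G ℓ j).edgeSet ↔ e ∈ G.edgeSet ∧ ℓ e = j := by
  simp [levelGraph]

lemma Nat.eq_and_eq_of_mul_add_eq_mul_add {k i j c c' : ℕ} (hc : c < k) (hc' : c' < k)
    (h : k * i + c = k * j + c') : i = j ∧ c = c' := by
  have hij : i = j := by
    rcases lt_trichotomy i j with hlt | heq | hgt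
    · nlinarith
    · exact heq
    · nlinarith
  subst hij
  exact ⟨rfl, by omega⟩

theorem isPartialSCF_of_levelGraph {G : SimpleGraph V} {ℓ : Sym2 V → ℕ} {k t : ℕ}
    {ψ : ℕ → Sym2 V → Option ℕ} (hℓ : ∀ e ∈ G.edgeSet, ℓ e < t)
    (hψ : ∀ j, IsPartialSCF (levelGraph G ℓ j) k (ψ j)) :
    IsPartialSCF G (k * t) (fun e => (ψ (ℓ e) e).map (k * ℓ e + ·)) := by
  have hψ_some : ∀ j e c, ψ j e = some c → (e ∈ G.edgeSet ∧ ℓ e = j) ∧ c < k :=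
    fun j e c he => by simpa only [mem_edgeSet_levelGraph] using (hψ j).1 _ _ he
  refine ⟨fun e c he => ?_, fun u v huv => ?_⟩
  · obtain ⟨c', hc', rfl⟩ := Option.map_eq_some_iff.1 he
    obtain ⟨⟨heG, -⟩, hc'k⟩ := hψ_some _ _ _ hc'
    refine ⟨heG, ?_⟩
    calc k * ℓ e + c' < k * (ℓ e + 1) := by rw [mul_add, mul_one]; omega
      _ ≤ k * t := Nat.mul_le_mul_left k (hℓ e heG)
  · set j := ℓ s(u, v)
    obtain ⟨c, hc⟩ := (hψ j).2 (levelGraph_adj.2 ⟨huv, rfl⟩)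
    obtain ⟨e₀, -, he₀⟩ := Set.nonempty_of_ncard_ne_zero (hc ▸ one_ne_zero)
    have hck : c < k := (hψ_some _ _ _ he₀).2
    refine ⟨k * j + c, ?_⟩
    convert hc using 2
    ext e
    simp only [Set.mem_ofPred_eq, mem_edgeNbhd_iff, Option.map_eq_some_iff]
    constructor
    · rintro ⟨⟨heG, hue⟩, c', hc', hkc⟩
      obtain ⟨hℓj, rfl⟩ := Nat.eq_and_eq_of_mul_add_eq_mul_add (hψ_some _ _ _ hc').2 hck hkc
      exact ⟨⟨mem_edgeSet_levelGraph.2 ⟨heG, hℓj⟩, hue⟩, hℓj ▸ hc'⟩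
    · rintro ⟨⟨-, hue⟩, hc'⟩
      obtain ⟨⟨heG, hℓj⟩, -⟩ := hψ_some _ _ _ hc'
      exact ⟨⟨heG, hue⟩, c, hℓj ▸ hc', by rw [hℓj]⟩

theorem sCFIndex_le_of_levelGraph {G : SimpleGraph V} {ℓ : Sym2 V → ℕ} {k t : ℕ}
    (hℓ : ∀ e ∈ G.edgeSet, ℓ e < t) (hψ : ∀ j, ∃ ψ, IsPartialSCF (levelGraph G ℓ j) k ψ) :
    sCFIndex G ≤ k * t := by
  choose ψ hψ using hψ
  exact Nat.sInf_le ⟨_, isPartialSCF_of_levelGraph hℓ hψ⟩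

lemma Nat.testBit_log2_xor_ne {x y : ℕ} (h : x ≠ y) :
    x.testBit (x ^^^ y).log2 ≠ y.testBit (x ^^^ y).log2 := by
  have hbit := Nat.testBit_log2 (n := x ^^^ y) (by simpa using h)
  rw [Nat.testBit_xor] at hbit
  intro heq
  simp [heq] at hbit

theorem stmt_7_general [Fintype V] (G : SimpleGraph V) :
    sCFIndex G ≤ 2 * Nat.clog 2 G.chromaticNumber.toNat := by
  obtain ⟨c, hc⟩ :=
    (G.colorable_iff_exists_bdd_nat_coloring _).1 G.colorable_chromaticNumber_of_fintype
  let ℓ : Sym2 V → ℕ :=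
    Sym2.lift ⟨fun u v => (c u ^^^ c v).log2, fun u v => by simp only [Nat.xor_comm]⟩
  refine sCFIndex_le_of_levelGraph (ℓ := ℓ) ?_ fun j =>
    exists_isPartialSCF_two (A := {v | (c v).testBit j = false}) ?_
  · refine Sym2.ind fun u v huv => ?_
    have hcuv : c u ≠ c v := c.valid huv
    refine (Nat.log2_lt (by simpa using hcuv)).2 (Nat.xor_lt_two_pow ?_ ?_) <;>
      exact (hc _).trans_le (Nat.le_pow_clog one_lt_two _)
  · intro u v huv
    obtain ⟨hG, rfl⟩ := levelGraph_adj.1 huv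
    have hbits := Nat.testBit_log2_xor_ne (c.valid hG)
    show (c u).testBit (c u ^^^ c v).log2 = false ↔ (c v).testBit (c u ^^^ c v).log2 ≠ false
    revert hbits
    cases (c u).testBit _ <;> cases (c v).testBit _ <;> simp

theorem stmt_7 [Fintype V] (G : SimpleGraph V)
    (hiso : ∀ v : V, ∃ u, G.Adj v u) (hedge : G.edgeSet.Nonempty) :
    sCFIndex G ≤ 2 * Nat.clog 2 G.chromaticNumber.toNat :=
  stmt_7_general G
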